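/- arXiv:1601.02552 — 3 statements merged into one kernel-verified Lean document; each statement's English description precedes it below -/
import Mathlib

section
/- (Radial Hardy-type pointwise decay on hyperbolic space.) There exists a constant C > 0 such that for every continuously differentiable function u : (0,∞) → ℝ with ∫₀^∞ (u'(r)² + u(r)²)·sinh(r)² dr ≤ 1, one has |u(r)| ≤ C·e^{−3r/4} for every r ≥ 10. -/
/-!
On `[r, r + 1]` with `r ≥ 1` the weight satisfies `sinh² ≥ e^{2r}/9`, so the unweighted
`H¹` energy of `u` on that unit interval is at most `9 e^{-2r}`. The one-dimensional Sobolev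
(trace) inequality `u(r)² ≤ 2 ∫_r^{r+1} (u'² + u²)`, obtained by averaging
`u(r)² ≤ u(s)² + ∫_r^{r+1} |2uu'|` over `s ∈ [r, r + 1]`, then gives `|u(r)| ≤ 5 e^{-r}`,
which is even stronger than the claimed `e^{-3r/4}` decay.
-/

open MeasureTheory Set Real

lemma exp_div_three_le_sinh {s : ℝ} (hs : 1 ≤ s) : exp s / 3 ≤ sinh s := by
  have h3 : (3 : ℝ) ≤ exp (2 * s) := by
    linarith [add_one_le_exp (2 : ℝ), exp_le_exp.2 (show (2 : ℝ) ≤ 2 * s by linarith)]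
  have hprod : exp (-s) * exp (2 * s) = exp s := by rw [← exp_add]; ring_nf
  rw [sinh_eq]
  nlinarith [exp_pos s, exp_pos (-s)]

lemma exp_two_mul_div_nine_le_sinh_sq {a s : ℝ} (ha : 1 ≤ a) (has : a ≤ s) :
    exp (2 * a) / 9 ≤ sinh s ^ 2 :=
  calc exp (2 * a) / 9 = (exp a / 3) ^ 2 := by rw [div_pow, ← exp_nat_mul]; norm_num
    _ ≤ (exp s / 3) ^ 2 := by gcongr
    _ ≤ sinh s ^ 2 := by gcongr; exact exp_div_three_le_sinh (ha.trans has)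

lemma intervalIntegral_le_exp_mul_integral_mul_sinh_sq {g : ℝ → ℝ} {a : ℝ} (ha : 1 ≤ a)
    (hg : ∀ t, 0 ≤ g t) (hg_int : IntervalIntegrable g volume a (a + 1))
    (hgw : IntegrableOn (fun r => g r * sinh r ^ 2) (Ioi 0)) :
    ∫ t in a..a + 1, g t ≤ 9 * exp (-(2 * a)) * ∫ r in Ioi 0, g r * sinh r ^ 2 := by
  have hsub : Ioc a (a + 1) ⊆ Ioi 0 := fun t ht => show 0 < t by linarith [ht.1]
  have hpoint : ∀ t ∈ Ioc a (a + 1), g t ≤ 9 * exp (-(2 * a)) * (g t * sinh t ^ 2) := by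
    intro t ht
    calc g t = 9 * exp (-(2 * a)) * (g t * (exp (2 * a) / 9)) := by
          rw [exp_neg]; field_simp
      _ ≤ 9 * exp (-(2 * a)) * (g t * sinh t ^ 2) := by
          gcongr
          · exact hg t
          · exact exp_two_mul_div_nine_le_sinh_sq ha ht.1.le
  rw [intervalIntegral.integral_of_le (by linarith)]
  calc ∫ t in Ioc a (a + 1), g t
      ≤ ∫ t in Ioc a (a + 1), 9 * exp (-(2 * a)) * (g t * sinh t ^ 2) :=
        setIntegral_mono_on hg_int.1 ((hgw.mono_set hsub).const_mul _) measurableSet_Ioc hpoint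
    _ = 9 * exp (-(2 * a)) * ∫ t in Ioc a (a + 1), g t * sinh t ^ 2 := integral_const_mul _ _
    _ ≤ 9 * exp (-(2 * a)) * ∫ r in Ioi 0, g r * sinh r ^ 2 := by
        gcongr ?_ * ?_
        exact setIntegral_mono_set hgw (ae_of_all _ fun t => mul_nonneg (hg t) (sq_nonneg _))
          hsub.eventuallyLE

lemma sq_le_two_mul_integral_deriv_sq_add_sq {u u' : ℝ → ℝ} {a : ℝ}
    (hu : ∀ t ∈ Icc a (a + 1), HasDerivAt u (u' t) t) (hu' : ContinuousOn u' (Icc a (a + 1))) :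
    u a ^ 2 ≤ 2 * ∫ t in a..a + 1, (u' t ^ 2 + u t ^ 2) := by
  set E := ∫ t in a..a + 1, (u' t ^ 2 + u t ^ 2)
  have ha : a ≤ a + 1 := by linarith
  have hucont : ContinuousOn u (Icc a (a + 1)) := fun t ht =>
    (hu t ht).continuousAt.continuousWithinAt
  have hu_sq_int : IntervalIntegrable (fun t => u t ^ 2) volume a (a + 1) :=
    (hucont.pow 2).intervalIntegrable_of_Icc ha
  have hE_int : IntervalIntegrable (fun t => u' t ^ 2 + u t ^ 2) volume a (a + 1) :=
    ((hu'.pow 2).add (hucont.pow 2)).intervalIntegrable_of_Icc ha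
  have hpoint : ∀ s ∈ Icc a (a + 1), u a ^ 2 ≤ u s ^ 2 + E := by
    intro s hs
    have hsub : Icc a s ⊆ Icc a (a + 1) := Icc_subset_Icc_right hs.2
    have hftc : ∫ t in a..s, 2 * u t * u' t = u s ^ 2 - u a ^ 2 := by
      refine intervalIntegral.integral_eq_sub_of_hasDerivAt (f := fun t => u t ^ 2)
        (fun t ht => ?_) ?_
      · rw [uIcc_of_le hs.1] at ht
        have h := (hu t (hsub ht)).fun_pow 2
        rwa [Nat.cast_ofNat, pow_one] at h
      · exact ((continuousOn_const.mul hucont).mul hu' |>.mono hsub).intervalIntegrable_of_Icc hs.1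
    have hcross : -∫ t in a..s, 2 * u t * u' t ≤ E :=
      calc -∫ t in a..s, 2 * u t * u' t = ∫ t in a..s, -(2 * u t * u' t) :=
            intervalIntegral.integral_neg.symm
        _ ≤ ∫ t in a..s, (u' t ^ 2 + u t ^ 2) := by
            refine intervalIntegral.integral_mono_on hs.1 ?_
              (((hu'.pow 2).add (hucont.pow 2)).mono hsub |>.intervalIntegrable_of_Icc hs.1)
              fun t _ => by nlinarith [sq_nonneg (u t + u' t)]
            exact (((continuousOn_const.mul hucont).mul hu').neg.mono hsub).intervalIntegrable_of_Icc
              hs.1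
        _ ≤ E := intervalIntegral.integral_mono_interval le_rfl hs.1 hs.2
            (ae_of_all _ fun t => by positivity) hE_int
    linarith
  calc u a ^ 2 = ∫ _ in a..a + 1, u a ^ 2 := by simp
    _ ≤ ∫ s in a..a + 1, (u s ^ 2 + E) :=
        intervalIntegral.integral_mono_on ha intervalIntegrable_const
          (hu_sq_int.add intervalIntegrable_const) hpoint
    _ = (∫ s in a..a + 1, u s ^ 2) + E := by
        rw [intervalIntegral.integral_add hu_sq_int intervalIntegrable_const]; simp
    _ ≤ E + E := by
        gcongr
        exact intervalIntegral.integral_mono_on ha hu_sq_int hE_int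
          fun t _ => le_add_of_nonneg_left (sq_nonneg _)
    _ = 2 * E := by ring

lemma sq_le_exp_mul_integral_deriv_sq_add_sq_mul_sinh_sq {u u' : ℝ → ℝ} {a : ℝ} (ha : 1 ≤ a)
    (hu : ∀ t ∈ Icc a (a + 1), HasDerivAt u (u' t) t) (hu' : ContinuousOn u' (Icc a (a + 1)))
    (hint : IntegrableOn (fun r => (u' r ^ 2 + u r ^ 2) * sinh r ^ 2) (Ioi 0)) :
    u a ^ 2 ≤ 18 * exp (-(2 * a)) * ∫ r in Ioi 0, (u' r ^ 2 + u r ^ 2) * sinh r ^ 2 := by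
  have hucont : ContinuousOn u (Icc a (a + 1)) := fun t ht =>
    (hu t ht).continuousAt.continuousWithinAt
  have hE_int : IntervalIntegrable (fun t => u' t ^ 2 + u t ^ 2) volume a (a + 1) :=
    ((hu'.pow 2).add (hucont.pow 2)).intervalIntegrable_of_Icc (by linarith)
  calc u a ^ 2 ≤ 2 * ∫ t in a..a + 1, (u' t ^ 2 + u t ^ 2) :=
        sq_le_two_mul_integral_deriv_sq_add_sq hu hu'
    _ ≤ 2 * (9 * exp (-(2 * a)) * ∫ r in Ioi 0, (u' r ^ 2 + u r ^ 2) * sinh r ^ 2) := by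
        gcongr
        exact intervalIntegral_le_exp_mul_integral_mul_sinh_sq ha (fun t => by positivity)
          hE_int hint
    _ = _ := by ring

/-- Radial Hardy-type pointwise decay on hyperbolic space: a radial function
with H¹(H³) norm at most one decays like `e^{-3r/4}` for `r ≥ 10`. -/
theorem radial_hardy_decay :
    ∃ C > (0 : ℝ), ∀ u : ℝ → ℝ, ContDiffOn ℝ 1 u (Ioi 0) →
      IntegrableOn (fun r => ((deriv u r) ^ 2 + u r ^ 2) * Real.sinh r ^ 2) (Ioi 0) →
      (∫ r in Ioi (0:ℝ), ((deriv u r) ^ 2 + u r ^ 2) * Real.sinh r ^ 2) ≤ 1 →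
      ∀ r ≥ (10 : ℝ), |u r| ≤ C * Real.exp (-(3 * r / 4)) := by
  refine ⟨5, by norm_num, fun u hu hint hI r hr => ?_⟩
  have hpos : Icc r (r + 1) ⊆ Ioi 0 := fun t ht => show 0 < t by linarith [ht.1]
  have hderiv : ∀ t ∈ Icc r (r + 1), HasDerivAt u (deriv u t) t := fun t ht =>
    ((hu.differentiableOn one_ne_zero).differentiableAt
      (isOpen_Ioi.mem_nhds (hpos ht))).hasDerivAt
  have hderiv_cont : ContinuousOn (deriv u) (Icc r (r + 1)) :=
    (hu.continuousOn_deriv_of_isOpen isOpen_Ioi le_rfl).mono hpos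
  have hexp_sq : exp (-r) ^ 2 = exp (-(2 * r)) := by rw [← exp_nat_mul]; ring_nf
  have hsq : u r ^ 2 ≤ (5 * exp (-r)) ^ 2 :=
    calc u r ^ 2
        ≤ 18 * exp (-(2 * r)) * ∫ t in Ioi 0, (deriv u t ^ 2 + u t ^ 2) * sinh t ^ 2 :=
          sq_le_exp_mul_integral_deriv_sq_add_sq_mul_sinh_sq (by linarith) hderiv hderiv_cont hint
      _ ≤ 18 * exp (-(2 * r)) * 1 := by gcongr
      _ ≤ (5 * exp (-r)) ^ 2 := by rw [mul_pow, hexp_sq]; nlinarith [exp_pos (-(2 * r))]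
  calc |u r| ≤ 5 * exp (-r) := abs_le_of_sq_le_sq hsq (by positivity)
    _ ≤ 5 * exp (-(3 * r / 4)) := by gcongr; linarith
end

section
/- (Small functions have functional value near 1/2.) For every σ > 0 there exists ε > 0 such that every f ∈ H¹_rad(H³) with f not identically zero and ‖f‖_{H¹} ≤ ε satisfies J(f) ≥ 1/2 − σ. -/
/-!
Put `g = f sinh`. Then `(f² sinh cosh)' = g'² + g² − f'² sinh²`, and since `f² sinh² ∈ L¹` the
boundary term `f² sinh cosh` is small along a sequence `r → ∞`. Hence
`∫ (g'² + g²) ≤ K := ∫ f'² sinh²` (the spectral gap of `H³`), which gives `M ≤ K` up to the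
factor `4π`. The same identity forces `g(0⁺) = 0`, so Cauchy–Schwarz gives `g(r)² ≤ K r` and
hence `f(r)² r ≤ K`. Together with Hardy's inequality `∫ (g/r)² ≤ 6K` this bounds
`∫ f⁶ sinh² ≤ K² ∫ (g/r)² ≤ 6K³`. Therefore `J ≥ (K/2 − K³)/M ≥ 1/2 − K²` as soon as
`K² ≤ 1/2`, and `K ≤ ‖f‖²_{H¹}`.
-/

open MeasureTheory Set Filter

/-- Squared L²(H³) norm of the hyperbolic gradient of a radial function
with profile `f`:  `K(f) = 4π ∫₀^∞ f'(r)² sinh(r)² dr`. -/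
noncomputable def Kh (f : ℝ → ℝ) : ℝ :=
  4 * Real.pi * ∫ r in Ioi (0:ℝ), (deriv f r) ^ 2 * Real.sinh r ^ 2

/-- Squared L²(H³) norm: `M(f) = 4π ∫₀^∞ f(r)² sinh(r)² dr`. -/
noncomputable def Mh (f : ℝ → ℝ) : ℝ :=
  4 * Real.pi * ∫ r in Ioi (0:ℝ), f r ^ 2 * Real.sinh r ^ 2

/-- Sixth power of the L⁶(H³) norm: `P(f) = 4π ∫₀^∞ f(r)⁶ sinh(r)² dr`. -/
noncomputable def Ph (f : ℝ → ℝ) : ℝ :=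
  4 * Real.pi * ∫ r in Ioi (0:ℝ), f r ^ 6 * Real.sinh r ^ 2

/-- Energy `E(f) = K(f)/2 − P(f)/6`. -/
noncomputable def Eh (f : ℝ → ℝ) : ℝ := Kh f / 2 - Ph f / 6

/-- The functional `J(f) = E(f)/M(f)`. -/
noncomputable def Jh (f : ℝ → ℝ) : ℝ := Eh f / Mh f

/-- `f ∈ H¹_rad(H³)`: `f` is C¹ on `(0,∞)` and `K(f) + M(f) < ∞`
(expressed as integrability of the two nonnegative integrands). -/
def H1rad (f : ℝ → ℝ) : Prop :=
  ContDiffOn ℝ 1 f (Ioi 0) ∧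
  IntegrableOn (fun r => (deriv f r) ^ 2 * Real.sinh r ^ 2) (Ioi 0) ∧
  IntegrableOn (fun r => f r ^ 2 * Real.sinh r ^ 2) (Ioi 0)

/-- The H¹(H³) norm `(K(f) + M(f))^{1/2}`. -/
noncomputable def H1norm (f : ℝ → ℝ) : ℝ := Real.sqrt (Kh f + Mh f)

/-- The set `Ω`. -/
def OmegaSet : Set (ℝ → ℝ) :=
  {f | H1rad f ∧ (∃ r > 0, f r ≠ 0) ∧
    Eh f < Real.sqrt 3 * Real.pi ^ 2 / 4 ∧
    Kh f < 3 * Real.sqrt 3 * Real.pi ^ 2 / 4}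

open Real Topology

theorem sq_intervalIntegral_le_mul_intervalIntegral_sq {u : ℝ → ℝ} {a b : ℝ} (hab : a ≤ b)
    (hu : IntervalIntegrable u volume a b)
    (hu2 : IntervalIntegrable (fun x => u x ^ 2) volume a b) :
    (∫ x in a..b, u x) ^ 2 ≤ (b - a) * ∫ x in a..b, u x ^ 2 := by
  rcases hab.eq_or_lt with rfl | hlt
  · simp
  set I := ∫ x in a..b, u x
  set c := I / (b - a)
  have hexpand : ∫ x in a..b, (u x - c) ^ 2 =
      (∫ x in a..b, u x ^ 2) - 2 * c * I + c ^ 2 * (b - a) := by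
    have hlin : IntervalIntegrable (fun x => 2 * u x * c) volume a b :=
      (hu.const_mul 2).mul_const c
    simp_rw [sub_sq]
    rw [intervalIntegral.integral_add (hu2.sub hlin) intervalIntegrable_const,
      intervalIntegral.integral_sub hu2 hlin, intervalIntegral.integral_mul_const,
      intervalIntegral.integral_const_mul, intervalIntegral.integral_const, smul_eq_mul]
    ring
  have hnonneg : 0 ≤ ∫ x in a..b, (u x - c) ^ 2 :=
    intervalIntegral.integral_nonneg hab fun x _ => sq_nonneg _
  have hL : 0 < b - a := sub_pos.2 hlt
  rw [hexpand] at hnonneg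
  have : c * (b - a) = I := div_mul_cancel₀ _ hL.ne'
  nlinarith

-- Hardy's inequality on `[a, b] ⊂ (0, ∞)`.
theorem intervalIntegral_div_sq_le {g g' : ℝ → ℝ} {a b : ℝ} (ha : 0 < a) (hab : a ≤ b)
    (hg : ∀ x ∈ Icc a b, HasDerivAt g (g' x) x) (hg' : ContinuousOn g' (Icc a b)) :
    ∫ x in a..b, (g x / x) ^ 2 ≤ 2 * (g a ^ 2 / a) + 4 * ∫ x in a..b, g' x ^ 2 := by
  have hpos : ∀ x ∈ Icc a b, 0 < x := fun x hx => ha.trans_le hx.1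
  have hv : ContinuousOn (fun x => g x / x) (Icc a b) :=
    (HasDerivAt.continuousOn hg).div continuousOn_id fun x hx => (hpos x hx).ne'
  have iv : IntervalIntegrable (fun x => (g x / x) ^ 2) volume a b :=
    (hv.pow 2).intervalIntegrable_of_Icc hab
  have ig : IntervalIntegrable (fun x => g' x ^ 2) volume a b :=
    (hg'.pow 2).intervalIntegrable_of_Icc hab
  have icross : IntervalIntegrable (fun x => 2 * (g x / x) * g' x) volume a b :=
    ((continuousOn_const.mul hv).mul hg').intervalIntegrable_of_Icc hab
  have hftc :
      ∫ x in a..b, ((g x / x) ^ 2 - 2 * (g x / x) * g' x) = g a ^ 2 / a - g b ^ 2 / b := by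
    rw [intervalIntegral.integral_eq_sub_of_hasDerivAt (f := fun x => -(g x ^ 2 / x))]
    · ring
    · intro x hx
      rw [uIcc_of_le hab] at hx
      have hd : HasDerivAt (fun x => -(g x ^ 2 / x))
          (-((2 * g x ^ 1 * g' x * x - g x ^ 2 * 1) / x ^ 2)) x :=
        (((hg x hx).pow 2).div (hasDerivAt_id' x) (hpos x hx).ne').neg
      refine hd.congr_deriv ?_
      have := (hpos x hx).ne'
      field_simp
      ring
    · exact iv.sub icross
  have hcross : ∫ x in a..b, 2 * (g x / x) * g' x
      ≤ ∫ x in a..b, ((g x / x) ^ 2 / 2 + 2 * g' x ^ 2) :=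
    intervalIntegral.integral_mono_on hab icross ((iv.div_const 2).add (ig.const_mul 2))
      fun x _ => by nlinarith [sq_nonneg (g x / x - 2 * g' x)]
  rw [intervalIntegral.integral_sub iv icross] at hftc
  rw [intervalIntegral.integral_add (iv.div_const 2) (ig.const_mul 2),
    intervalIntegral.integral_div, intervalIntegral.integral_const_mul] at hcross
  have hb : 0 ≤ g b ^ 2 / b := div_nonneg (sq_nonneg _) (ha.le.trans hab)
  linarith

theorem MeasureTheory.IntegrableOn.frequently_atTop_norm_lt {E : Type*} [NormedAddCommGroup E]
    {h : ℝ → E} {a c : ℝ} (hh : IntegrableOn h (Ioi a)) (hc : 0 < c) :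
    ∃ᶠ x in atTop, ‖h x‖ < c := by
  intro hev
  obtain ⟨N, hN⟩ := eventually_atTop.1 hev
  have hconst : IntegrableOn (fun _ => c) (Ioi (max a N)) := by
    refine Integrable.mono' (hh.mono_set (Ioi_subset_Ioi (le_max_left _ _))).norm
      aestronglyMeasurable_const ?_
    filter_upwards [ae_restrict_mem measurableSet_Ioi] with x hx
    rw [norm_of_nonneg hc.le]
    exact not_lt.1 (hN x ((le_max_right _ _).trans hx.le))
  rw [integrableOn_const_iff] at hconst
  simp [hc.ne'] at hconst

-- Needs no integrability: a non-integrable `h` has integral `0 = ∫ x in 1..1, h x ≤ C`.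
theorem setIntegral_Ioi_le_of_forall_intervalIntegral_le {h : ℝ → ℝ} {C : ℝ}
    (hC : ∀ a b, 0 < a → a ≤ b → ∫ x in a..b, h x ≤ C) : ∫ x in Ioi 0, h x ≤ C := by
  by_cases hi : IntegrableOn h (Ioi 0)
  · have hcover : AECover (volume.restrict (Ioi 0)) atTop
        fun n : ℕ => Ioi (1 / (n + 1 : ℝ)) ∩ Iic (n + 1 : ℝ) :=
      (aecover_Ioi_of_Ioi tendsto_one_div_add_atTop_nhds_zero_nat).inter
        (aecover_Iic (tendsto_natCast_atTop_atTop.atTop_add tendsto_const_nhds))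
    refine le_of_tendsto' (hcover.integral_tendsto_of_countably_generated hi) fun n => ?_
    have hle : 1 / (n + 1 : ℝ) ≤ n + 1 := by
      rw [div_le_iff₀ (by positivity)]; nlinarith [(n.cast_nonneg : (0:ℝ) ≤ n)]
    rw [Measure.restrict_restrict (measurableSet_Ioi.inter measurableSet_Iic),
      inter_eq_left.2 ((Ioi_subset_Ioi (by positivity)).trans' inter_subset_left), Ioi_inter_Iic,
      ← intervalIntegral.integral_of_le hle]
    exact hC _ _ (by positivity) hle
  · rw [integral_undef hi]
    simpa using hC 1 1 one_pos le_rfl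

theorem setIntegral_pos_of_continuousOn {X : Type*} [TopologicalSpace X] [MeasurableSpace X]
    [OpensMeasurableSpace X] {μ : Measure X} [μ.IsOpenPosMeasure] {h : X → ℝ} {U : Set X}
    (hU : IsOpen U) (hc : ContinuousOn h U) (hnn : ∀ x ∈ U, 0 ≤ h x)
    (hi : IntegrableOn h U μ) {x₀ : X} (hx₀ : x₀ ∈ U) (hne : h x₀ ≠ 0) :
    0 < ∫ x in U, h x ∂μ := by
  rw [setIntegral_pos_iff_support_of_nonneg_ae
    (ae_restrict_of_forall_mem hU.measurableSet hnn) hi, inter_comm]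
  exact (hc.isOpen_inter_preimage hU isOpen_compl_singleton).measure_pos μ ⟨x₀, hx₀, hne⟩

theorem cosh_le_two_mul_sinh {x : ℝ} (hx : 1 ≤ x) : cosh x ≤ 2 * sinh x := by
  have h1 : cosh x - sinh x ≤ 1 := by
    rw [cosh_sub_sinh]; exact exp_le_one_iff.2 (by linarith)
  have h2 : x ≤ sinh x := self_le_sinh_iff.2 (by linarith)
  linarith

theorem ContinuousOn.intervalIntegrable_of_Ioi_zero {u : ℝ → ℝ} {a b : ℝ}
    (hu : ContinuousOn u (Ioi 0)) (ha : 0 < a) (hab : a ≤ b) : IntervalIntegrable u volume a b :=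
  (hu.mono ((Icc_subset_Ioi_iff hab).2 ha)).intervalIntegrable_of_Icc hab

noncomputable def gradSqIntegral (f : ℝ → ℝ) : ℝ :=
  ∫ r in Ioi (0:ℝ), deriv f r ^ 2 * sinh r ^ 2

theorem gradSqIntegral_nonneg (f : ℝ → ℝ) : 0 ≤ gradSqIntegral f :=
  setIntegral_nonneg measurableSet_Ioi fun _ _ => by positivity

noncomputable def sinhMul (f : ℝ → ℝ) (r : ℝ) : ℝ := f r * sinh r

noncomputable def sinhMulDeriv (f : ℝ → ℝ) (r : ℝ) : ℝ :=
  deriv f r * sinh r + f r * cosh r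

theorem sinhMul_sq (f : ℝ → ℝ) (r : ℝ) : sinhMul f r ^ 2 = f r ^ 2 * sinh r ^ 2 :=
  mul_pow _ _ _

theorem sq_mul_sinh_mul_cosh_nonneg (f : ℝ → ℝ) {r : ℝ} (hr : 0 < r) :
    0 ≤ f r ^ 2 * sinh r * cosh r :=
  mul_nonneg (mul_nonneg (sq_nonneg _) (sinh_pos_iff.2 hr).le) (cosh_pos r).le

namespace H1rad

variable {f : ℝ → ℝ} {a b r : ℝ}

theorem hasDerivAt (hf : H1rad f) (hr : 0 < r) : HasDerivAt f (deriv f r) r :=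
  ((hf.1.differentiableOn one_ne_zero).differentiableAt (Ioi_mem_nhds hr)).hasDerivAt

theorem hasDerivAt_sinhMul (hf : H1rad f) (hr : 0 < r) :
    HasDerivAt (sinhMul f) (sinhMulDeriv f r) r :=
  (hf.hasDerivAt hr).mul (hasDerivAt_sinh r)

theorem continuousOn_sinhMul (hf : H1rad f) : ContinuousOn (sinhMul f) (Ioi 0) :=
  hf.1.continuousOn.mul continuous_sinh.continuousOn

theorem continuousOn_sinhMulDeriv (hf : H1rad f) : ContinuousOn (sinhMulDeriv f) (Ioi 0) :=
  ((hf.1.continuousOn_deriv_of_isOpen isOpen_Ioi le_rfl).mul continuous_sinh.continuousOn).add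
    (hf.1.continuousOn.mul continuous_cosh.continuousOn)

theorem continuousOn_sinhMulDeriv_sq_add_sinhMul_sq (hf : H1rad f) :
    ContinuousOn (fun x => sinhMulDeriv f x ^ 2 + sinhMul f x ^ 2) (Ioi 0) :=
  (hf.continuousOn_sinhMulDeriv.pow 2).add (hf.continuousOn_sinhMul.pow 2)

theorem continuousOn_deriv_sq_mul_sinh_sq (hf : H1rad f) :
    ContinuousOn (fun x => deriv f x ^ 2 * sinh x ^ 2) (Ioi 0) :=
  ((hf.1.continuousOn_deriv_of_isOpen isOpen_Ioi le_rfl).pow 2).mul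
    (continuous_sinh.continuousOn.pow 2)

theorem hasDerivAt_sq_mul_sinh_mul_cosh (hf : H1rad f) (hr : 0 < r) :
    HasDerivAt (fun x => f x ^ 2 * sinh x * cosh x)
      (sinhMulDeriv f r ^ 2 + sinhMul f r ^ 2 - deriv f r ^ 2 * sinh r ^ 2) r := by
  refine ((((hf.hasDerivAt hr).pow 2).mul (hasDerivAt_sinh r)).mul
    (hasDerivAt_cosh r)).congr_deriv ?_
  simp only [sinhMulDeriv, sinhMul, Pi.mul_apply, Pi.pow_apply]
  ring

theorem intervalIntegral_sinhMulDeriv_sq_add_sinhMul_sq (hf : H1rad f) (ha : 0 < a)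
    (hab : a ≤ b) :
    ∫ x in a..b, (sinhMulDeriv f x ^ 2 + sinhMul f x ^ 2) =
      f b ^ 2 * sinh b * cosh b - f a ^ 2 * sinh a * cosh a +
        ∫ x in a..b, deriv f x ^ 2 * sinh x ^ 2 := by
  have i1 := hf.continuousOn_sinhMulDeriv_sq_add_sinhMul_sq.intervalIntegrable_of_Ioi_zero ha hab
  have i2 := hf.continuousOn_deriv_sq_mul_sinh_sq.intervalIntegrable_of_Ioi_zero ha hab
  have hftc := intervalIntegral.integral_eq_sub_of_hasDerivAt
    (fun x hx => hf.hasDerivAt_sq_mul_sinh_mul_cosh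
      (ha.trans_le (by rw [uIcc_of_le hab] at hx; exact hx.1))) (i1.sub i2)
  rw [intervalIntegral.integral_sub i1 i2] at hftc
  linarith

theorem intervalIntegral_deriv_sq_mul_sinh_sq_le (hf : H1rad f) (ha : 0 < a) (hab : a ≤ b) :
    ∫ x in a..b, deriv f x ^ 2 * sinh x ^ 2 ≤ gradSqIntegral f := by
  rw [intervalIntegral.integral_of_le hab]
  exact setIntegral_mono_set hf.2.1 (ae_of_all _ fun x => by positivity)
    (Ioc_subset_Ioi_self.trans (Ioi_subset_Ioi ha.le)).eventuallyLE

theorem sq_mul_sinh_mul_cosh_le (hf : H1rad f) (ha : 0 < a) (hab : a ≤ b) :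
    f a ^ 2 * sinh a * cosh a ≤ f b ^ 2 * sinh b * cosh b + gradSqIntegral f := by
  have hid := hf.intervalIntegral_sinhMulDeriv_sq_add_sinhMul_sq ha hab
  have h0 : 0 ≤ ∫ x in a..b, (sinhMulDeriv f x ^ 2 + sinhMul f x ^ 2) :=
    intervalIntegral.integral_nonneg hab fun x _ => by positivity
  linarith [hf.intervalIntegral_deriv_sq_mul_sinh_sq_le ha hab]

theorem frequently_sq_mul_sinh_mul_cosh_lt (hf : H1rad f) {c : ℝ} (hc : 0 < c) :
    ∃ᶠ r in atTop, f r ^ 2 * sinh r * cosh r < c := by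
  refine ((hf.2.2.frequently_atTop_norm_lt (half_pos hc)).and_eventually
    (eventually_ge_atTop 1)).mono fun r ⟨hsmall, hr⟩ => ?_
  rw [norm_of_nonneg (by positivity)] at hsmall
  have hs : 0 ≤ f r ^ 2 * sinh r := mul_nonneg (sq_nonneg _) (sinh_pos_iff.2 (by linarith)).le
  calc f r ^ 2 * sinh r * cosh r ≤ f r ^ 2 * sinh r * (2 * sinh r) :=
        mul_le_mul_of_nonneg_left (cosh_le_two_mul_sinh hr) hs
    _ < c := by linarith

theorem intervalIntegral_sinhMulDeriv_sq_add_sinhMul_sq_le (hf : H1rad f) (ha : 0 < a)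
    (hab : a ≤ b) :
    ∫ x in a..b, (sinhMulDeriv f x ^ 2 + sinhMul f x ^ 2) ≤ gradSqIntegral f := by
  refine le_of_forall_pos_le_add fun c hc => ?_
  obtain ⟨b', hflux, hbb'⟩ :=
    ((hf.frequently_sq_mul_sinh_mul_cosh_lt hc).and_eventually (eventually_ge_atTop b)).exists
  have hab' : a ≤ b' := hab.trans hbb'
  calc ∫ x in a..b, (sinhMulDeriv f x ^ 2 + sinhMul f x ^ 2)
      ≤ ∫ x in a..b', (sinhMulDeriv f x ^ 2 + sinhMul f x ^ 2) :=
        intervalIntegral.integral_mono_interval le_rfl hab hbb'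
          (ae_of_all _ fun x => by positivity)
          (hf.continuousOn_sinhMulDeriv_sq_add_sinhMul_sq.intervalIntegrable_of_Ioi_zero ha hab')
    _ = f b' ^ 2 * sinh b' * cosh b' - f a ^ 2 * sinh a * cosh a +
          ∫ x in a..b', deriv f x ^ 2 * sinh x ^ 2 :=
        hf.intervalIntegral_sinhMulDeriv_sq_add_sinhMul_sq ha hab'
    _ ≤ gradSqIntegral f + c := by
        linarith [sq_mul_sinh_mul_cosh_nonneg f ha,
          hf.intervalIntegral_deriv_sq_mul_sinh_sq_le ha hab']

theorem intervalIntegral_sinhMulDeriv_sq_le (hf : H1rad f) (ha : 0 < a) (hab : a ≤ b) :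
    ∫ x in a..b, sinhMulDeriv f x ^ 2 ≤ gradSqIntegral f :=
  (intervalIntegral.integral_mono_on hab
    ((hf.continuousOn_sinhMulDeriv.pow 2).intervalIntegrable_of_Ioi_zero ha hab)
    (hf.continuousOn_sinhMulDeriv_sq_add_sinhMul_sq.intervalIntegrable_of_Ioi_zero ha hab)
    fun _ _ => le_add_of_nonneg_right (sq_nonneg _)).trans
    (hf.intervalIntegral_sinhMulDeriv_sq_add_sinhMul_sq_le ha hab)

theorem tendsto_sinhMul_nhdsGT_zero (hf : H1rad f) : Tendsto (sinhMul f) (𝓝[>] 0) (𝓝 0) := by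
  set C := f 1 ^ 2 * sinh 1 * cosh 1 + gradSqIntegral f
  refine squeeze_zero_norm' (a := fun x => √(C * sinh x)) ?_ ?_
  · filter_upwards [Ioc_mem_nhdsGT one_pos] with x ⟨hx, hx1⟩
    refine abs_le_sqrt ?_
    have hs : 0 < sinh x := sinh_pos_iff.2 hx
    calc sinhMul f x ^ 2 = f x ^ 2 * sinh x * sinh x := by rw [sinhMul_sq]; ring
      _ ≤ f x ^ 2 * sinh x * cosh x * sinh x := mul_le_mul_of_nonneg_right
          (le_mul_of_one_le_right (mul_nonneg (sq_nonneg _) hs.le) (one_le_cosh x)) hs.le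
      _ ≤ C * sinh x := by gcongr; exact hf.sq_mul_sinh_mul_cosh_le hx hx1
  · simpa using ((continuous_const.mul continuous_sinh).sqrt.tendsto 0).mono_left
      nhdsWithin_le_nhds

theorem sinhMul_sq_le (hf : H1rad f) (hr : 0 < r) : sinhMul f r ^ 2 ≤ gradSqIntegral f * r := by
  have hbound : ∀ a ∈ Ioc 0 r, (sinhMul f r - sinhMul f a) ^ 2 ≤ gradSqIntegral f * r := by
    rintro a ⟨ha, har⟩
    have hg' := hf.continuousOn_sinhMulDeriv.intervalIntegrable_of_Ioi_zero ha har
    rw [← intervalIntegral.integral_eq_sub_of_hasDerivAt (fun x hx => hf.hasDerivAt_sinhMul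
      (ha.trans_le (by rw [uIcc_of_le har] at hx; exact hx.1))) hg']
    calc (∫ x in a..r, sinhMulDeriv f x) ^ 2 ≤ (r - a) * ∫ x in a..r, sinhMulDeriv f x ^ 2 :=
          sq_intervalIntegral_le_mul_intervalIntegral_sq har hg'
            ((hf.continuousOn_sinhMulDeriv.pow 2).intervalIntegrable_of_Ioi_zero ha har)
      _ ≤ r * gradSqIntegral f := by
          gcongr
          · exact intervalIntegral.integral_nonneg har fun x _ => sq_nonneg _
          · linarith
          · exact hf.intervalIntegral_sinhMulDeriv_sq_le ha har
      _ = gradSqIntegral f * r := mul_comm _ _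
  have hlim : Tendsto (fun a => (sinhMul f r - sinhMul f a) ^ 2) (𝓝[>] 0)
      (𝓝 (sinhMul f r ^ 2)) := by
    simpa using (tendsto_const_nhds.sub hf.tendsto_sinhMul_nhdsGT_zero).pow 2
  exact le_of_tendsto hlim (eventually_of_mem (Ioc_mem_nhdsGT hr) hbound)

theorem intervalIntegral_sinhMul_div_sq_le (hf : H1rad f) (ha : 0 < a) (hab : a ≤ b) :
    ∫ x in a..b, (sinhMul f x / x) ^ 2 ≤ 6 * gradSqIntegral f := by
  have hardy := intervalIntegral_div_sq_le ha hab
    (fun x hx => hf.hasDerivAt_sinhMul (ha.trans_le hx.1))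
    (hf.continuousOn_sinhMulDeriv.mono ((Icc_subset_Ioi_iff hab).2 ha))
  have hboundary : sinhMul f a ^ 2 / a ≤ gradSqIntegral f :=
    (div_le_iff₀ ha).2 (hf.sinhMul_sq_le ha)
  linarith [hf.intervalIntegral_sinhMulDeriv_sq_le ha hab]

theorem pow_six_mul_sinh_sq_le (hf : H1rad f) (hr : 0 < r) :
    f r ^ 6 * sinh r ^ 2 ≤ gradSqIntegral f ^ 2 * (sinhMul f r / r) ^ 2 := by
  have hsup : f r ^ 2 * r ≤ gradSqIntegral f := by
    refine le_of_mul_le_mul_right ?_ hr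
    calc f r ^ 2 * r * r ≤ f r ^ 2 * sinh r ^ 2 := by
          rw [mul_assoc, ← sq]; gcongr; exact self_le_sinh_iff.2 hr.le
      _ ≤ gradSqIntegral f * r := by rw [← sinhMul_sq]; exact hf.sinhMul_sq_le hr
  calc f r ^ 6 * sinh r ^ 2 = (f r ^ 2 * r) ^ 2 * (sinhMul f r / r) ^ 2 := by
        rw [div_pow, sinhMul_sq]; field_simp
    _ ≤ gradSqIntegral f ^ 2 * (sinhMul f r / r) ^ 2 := by gcongr

theorem integral_sq_mul_sinh_sq_le (hf : H1rad f) :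
    ∫ r in Ioi 0, f r ^ 2 * sinh r ^ 2 ≤ gradSqIntegral f := by
  refine setIntegral_Ioi_le_of_forall_intervalIntegral_le fun a b ha hab => ?_
  simp_rw [← sinhMul_sq]
  refine (intervalIntegral.integral_mono_on hab ?_ ?_ fun x _ => le_add_of_nonneg_left
    (sq_nonneg (sinhMulDeriv f x))).trans
      (hf.intervalIntegral_sinhMulDeriv_sq_add_sinhMul_sq_le ha hab)
  · exact (hf.continuousOn_sinhMul.pow 2).intervalIntegrable_of_Ioi_zero ha hab
  · exact hf.continuousOn_sinhMulDeriv_sq_add_sinhMul_sq.intervalIntegrable_of_Ioi_zero ha hab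

theorem integral_pow_six_mul_sinh_sq_le (hf : H1rad f) :
    ∫ r in Ioi 0, f r ^ 6 * sinh r ^ 2 ≤ 6 * gradSqIntegral f ^ 3 := by
  refine setIntegral_Ioi_le_of_forall_intervalIntegral_le fun a b ha hab => ?_
  calc ∫ x in a..b, f x ^ 6 * sinh x ^ 2
      ≤ ∫ x in a..b, gradSqIntegral f ^ 2 * (sinhMul f x / x) ^ 2 := by
        refine intervalIntegral.integral_mono_on hab ?_ ?_
          fun x hx => hf.pow_six_mul_sinh_sq_le (ha.trans_le hx.1)
        · exact ((hf.1.continuousOn.pow 6).mul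
            (continuous_sinh.continuousOn.pow 2)).intervalIntegrable_of_Ioi_zero ha hab
        · exact (continuousOn_const.mul ((hf.continuousOn_sinhMul.div continuousOn_id
            fun _ hx => (mem_Ioi.1 hx).ne').pow 2)).intervalIntegrable_of_Ioi_zero ha hab
    _ = gradSqIntegral f ^ 2 * ∫ x in a..b, (sinhMul f x / x) ^ 2 :=
        intervalIntegral.integral_const_mul _ _
    _ ≤ gradSqIntegral f ^ 2 * (6 * gradSqIntegral f) := by
        gcongr; exact hf.intervalIntegral_sinhMul_div_sq_le ha hab
    _ = 6 * gradSqIntegral f ^ 3 := by ring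

theorem integral_sq_mul_sinh_sq_pos (hf : H1rad f) (hne : ∃ r > 0, f r ≠ 0) :
    0 < ∫ r in Ioi 0, f r ^ 2 * sinh r ^ 2 := by
  obtain ⟨r, hr, hfr⟩ := hne
  exact setIntegral_pos_of_continuousOn isOpen_Ioi
    ((hf.1.continuousOn.pow 2).mul (continuous_sinh.continuousOn.pow 2))
    (fun _ _ => by positivity) hf.2.2 hr
    (mul_ne_zero (pow_ne_zero 2 hfr) (pow_ne_zero 2 (sinh_pos_iff.2 hr).ne'))

theorem half_sub_gradSqIntegral_sq_le_Jh (hf : H1rad f) (hne : ∃ r > 0, f r ≠ 0)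
    (hK : gradSqIntegral f ^ 2 ≤ 1 / 2) : 1 / 2 - gradSqIntegral f ^ 2 ≤ Jh f := by
  have hM := hf.integral_sq_mul_sinh_sq_pos hne
  have hMK := hf.integral_sq_mul_sinh_sq_le
  have hP := hf.integral_pow_six_mul_sinh_sq_le
  rw [Jh, Eh, show Kh f = 4 * π * gradSqIntegral f from rfl, Mh, Ph,
    le_div_iff₀ (by positivity)]
  nlinarith [mul_nonneg (mul_nonneg pi_pos.le (sub_nonneg.2 hMK)) (sub_nonneg.2 hK),
    mul_le_mul_of_nonneg_left hP pi_pos.le, gradSqIntegral_nonneg f]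

end H1rad

theorem gradSqIntegral_le_H1norm_sq (f : ℝ → ℝ) : gradSqIntegral f ≤ H1norm f ^ 2 := by
  have hK : Kh f = 4 * π * gradSqIntegral f := rfl
  have hM : 0 ≤ Mh f :=
    mul_nonneg (by positivity) (setIntegral_nonneg measurableSet_Ioi fun _ _ => by positivity)
  have hK0 := gradSqIntegral_nonneg f
  rw [H1norm, sq_sqrt (add_nonneg (by rw [hK]; positivity) hM), hK]
  nlinarith [pi_gt_three]

/-- Small functions have functional value near `1/2`. -/
theorem small_data_J_near_half :
    ∀ σ > (0 : ℝ), ∃ ε > (0 : ℝ), ∀ f : ℝ → ℝ, H1rad f →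
      (∃ r > 0, f r ≠ 0) → H1norm f ≤ ε → Jh f ≥ 1 / 2 - σ := by
  intro σ hσ
  set δ := min σ (1 / 2)
  have hδ : 0 < δ := lt_min hσ one_half_pos
  refine ⟨√(√δ), by positivity, fun f hf hne hnorm => ?_⟩
  have hK : gradSqIntegral f ≤ √δ := by
    calc gradSqIntegral f ≤ H1norm f ^ 2 := gradSqIntegral_le_H1norm_sq f
      _ ≤ √(√δ) ^ 2 := by gcongr; exact sqrt_nonneg _
      _ = √δ := sq_sqrt (sqrt_nonneg _)
  have hK2 : gradSqIntegral f ^ 2 ≤ δ := by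
    calc gradSqIntegral f ^ 2 ≤ √δ ^ 2 := by gcongr; exact gradSqIntegral_nonneg f
      _ = δ := sq_sqrt hδ.le
  have hJ := hf.half_sub_gradSqIntegral_sq_le_Jh hne (hK2.trans (min_le_right _ _))
  linarith [min_le_left σ (1 / 2)]
end

section
/- (Decoupling decomposition away from the origin.) Let R > 0, let (R_k) be a sequence of positive reals with R_k → ∞, let ε > 0, and let (f_k) be a sequence in H¹_rad(H³) with sup_k ‖f_k‖_{H¹} < ∞. Then there exist a strictly increasing map k : ℕ → ℕ, functions g_n, h_n, r_n ∈ H¹_rad(H³), and a sequence R̃_n → ∞ such that f_{k(n)} = g_n + h_n + r_n for all n, and for all sufficiently large n: g_n(r) = f_{k(n)}(r) for all r ≤ R; h_n(r) = f_{k(n)}(r) for all r ≥ R_{k(n)}; g_n and h_n have disjoint supports; h_n(r) = 0 for all r ≤ R̃_n; and ‖r_n‖_{H¹} ≤ ε. -/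
open MeasureTheory Set Filter

/-! The energy density `(f'² + f²) sinh² r` of `f k` integrates to `‖f k‖²_{H¹} / 4π ≤ C² / 4π`.
Beyond `a = max R (n + 1)`, split `[a, a + 2N]` into `N` windows of length 2: one of them,
`[b, b + 2]`, carries at most `C² / N` of the energy of `f (k n)`. With the smooth step
`χ_b = smoothTransition (· - b)`, put `g = (1 - χ_b) f`, `h = χ_{b+1} f` and
`r = (χ_b - χ_{b+1}) f`. The remainder is supported in the window and, by the product rule,
its energy is at most `(8 c² + 2)` times the window energy, where `c = sup |χ'|`; this is
below `ε²` once `N` is large. The subsequence `k` pushes `R_{k n}` beyond the window. -/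

open Topology

noncomputable def h1Density (f : ℝ → ℝ) (r : ℝ) : ℝ :=
  (deriv f r ^ 2 + f r ^ 2) * Real.sinh r ^ 2

lemma h1Density_nonneg (f : ℝ → ℝ) (r : ℝ) : 0 ≤ h1Density f r := by
  unfold h1Density; positivity

lemma continuousOn_h1Density {f : ℝ → ℝ} (hc : ContDiffOn ℝ 1 f (Ioi 0)) :
    ContinuousOn (h1Density f) (Ioi 0) := by
  have := hc.continuousOn_deriv_of_isOpen isOpen_Ioi le_rfl
  have := hc.continuousOn
  unfold h1Density
  fun_prop

namespace H1rad

variable {f : ℝ → ℝ}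

lemma differentiableAt (hf : H1rad f) {x : ℝ} (hx : 0 < x) : DifferentiableAt ℝ f x :=
  (hf.1.contDiffAt (Ioi_mem_nhds hx)).differentiableAt one_ne_zero

lemma integrableOn_h1Density (hf : H1rad f) : IntegrableOn (h1Density f) (Ioi 0) :=
  (hf.2.1.add hf.2.2).congr (ae_of_all _ fun r => by simp only [Pi.add_apply, h1Density]; ring)

lemma Kh_add_Mh (hf : H1rad f) :
    Kh f + Mh f = 4 * Real.pi * ∫ r in Ioi 0, h1Density f r := by
  rw [Kh, Mh, ← mul_add, ← integral_add hf.2.1 hf.2.2]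
  simp only [h1Density, add_mul]

lemma of_integrableOn_h1Density (hc : ContDiffOn ℝ 1 f (Ioi 0))
    (hi : IntegrableOn (h1Density f) (Ioi 0)) : H1rad f := by
  have hsinh : ContinuousOn (fun r => Real.sinh r ^ 2) (Ioi 0) := by fun_prop
  refine ⟨hc, hi.mono' ?_ ?_, hi.mono' ?_ ?_⟩
  · exact (((hc.continuousOn_deriv_of_isOpen isOpen_Ioi le_rfl).pow 2).mul hsinh
      ).aestronglyMeasurable measurableSet_Ioi
  · refine ae_of_all _ fun r => ?_
    rw [Real.norm_of_nonneg (by positivity)]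
    exact mul_le_mul_of_nonneg_right (le_add_of_nonneg_right (sq_nonneg _)) (sq_nonneg _)
  · exact ((hc.continuousOn.pow 2).mul hsinh).aestronglyMeasurable measurableSet_Ioi
  · refine ae_of_all _ fun r => ?_
    rw [Real.norm_of_nonneg (by positivity)]
    exact mul_le_mul_of_nonneg_right (le_add_of_nonneg_left (sq_nonneg _)) (sq_nonneg _)

end H1rad

lemma h1Density_mul_le {φ f : ℝ → ℝ} {x c : ℝ} (hφ : DifferentiableAt ℝ φ x)
    (hf : DifferentiableAt ℝ f x) (hφ1 : |φ x| ≤ 1) (hc : |deriv φ x| ≤ c) :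
    h1Density (fun y => φ y * f y) x ≤ (2 * c ^ 2 + 2) * h1Density f x := by
  have hφ2 : φ x ^ 2 ≤ 1 := by simpa using sq_le_sq' (abs_le.1 hφ1).1 (abs_le.1 hφ1).2
  have hc2 : deriv φ x ^ 2 ≤ c ^ 2 := sq_le_sq' (abs_le.1 hc).1 (abs_le.1 hc).2
  have key : (deriv φ x * f x + φ x * deriv f x) ^ 2 + (φ x * f x) ^ 2
      ≤ (2 * c ^ 2 + 2) * (deriv f x ^ 2 + f x ^ 2) := by
    nlinarith [sq_nonneg (deriv φ x * f x - φ x * deriv f x), sq_nonneg (c * deriv f x),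
      mul_le_mul_of_nonneg_right hc2 (sq_nonneg (f x)),
      mul_le_mul_of_nonneg_right hφ2 (sq_nonneg (deriv f x)),
      mul_le_mul_of_nonneg_right hφ2 (sq_nonneg (f x))]
  simp only [h1Density, deriv_fun_mul hφ hf]
  calc _ ≤ (2 * c ^ 2 + 2) * (deriv f x ^ 2 + f x ^ 2) * Real.sinh x ^ 2 := by gcongr
    _ = _ := by ring

section Multiplier

variable {φ f : ℝ → ℝ} {c : ℝ}

lemma H1rad.mul (hf : H1rad f) (hφ : ContDiff ℝ 1 φ) (hφ1 : ∀ x, |φ x| ≤ 1)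
    (hc : ∀ x, |deriv φ x| ≤ c) : H1rad (fun x => φ x * f x) := by
  refine .of_integrableOn_h1Density (hφ.contDiffOn.mul hf.1)
    ((hf.integrableOn_h1Density.const_mul (2 * c ^ 2 + 2)).mono' ?_ ?_)
  · exact (continuousOn_h1Density (hφ.contDiffOn.mul hf.1)).aestronglyMeasurable measurableSet_Ioi
  · refine ae_restrict_of_forall_mem measurableSet_Ioi fun x hx => ?_
    rw [Real.norm_of_nonneg (h1Density_nonneg _ _)]
    exact h1Density_mul_le (hφ.differentiable one_ne_zero x)
      (hf.differentiableAt hx) (hφ1 x) (hc x)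

lemma Kh_add_Mh_mul_le_of_tsupport_subset (hf : H1rad f) (hφ : ContDiff ℝ 1 φ)
    (hφ1 : ∀ x, |φ x| ≤ 1) (hc : ∀ x, |deriv φ x| ≤ c) {s : Set ℝ} (hs : MeasurableSet s)
    (hs0 : s ⊆ Ioi 0) (hsupp : tsupport φ ⊆ s) :
    Kh (fun x => φ x * f x) + Mh (fun x => φ x * f x)
      ≤ (2 * c ^ 2 + 2) * (4 * Real.pi * ∫ r in s, h1Density f r) := by
  have hφf := hf.mul hφ hφ1 hc
  have hvanish : ∀ x ∈ Ioi 0 \ s, h1Density (fun y => φ y * f y) x = 0 := fun x hx => by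
    have hx' : x ∉ tsupport (fun y => φ y * f y) :=
      fun h => hx.2 (hsupp (tsupport_mul_subset_left h))
    simp [h1Density, deriv_of_notMem_tsupport hx', image_eq_zero_of_notMem_tsupport hx']
  rw [hφf.Kh_add_Mh,
    setIntegral_eq_of_subset_of_forall_sdiff_eq_zero measurableSet_Ioi hs0 hvanish,
    mul_left_comm (2 * c ^ 2 + 2), ← integral_const_mul (2 * c ^ 2 + 2)]
  refine mul_le_mul_of_nonneg_left ?_ (by positivity)
  refine setIntegral_mono_on (hφf.integrableOn_h1Density.mono_set hs0)
    ((hf.integrableOn_h1Density.mono_set hs0).const_mul _) hs fun x hx => ?_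
  exact h1Density_mul_le (hφ.differentiable one_ne_zero x)
    (hf.differentiableAt (hs0 hx)) (hφ1 x) (hc x)

end Multiplier

section Cutoff

noncomputable def cutoff (b x : ℝ) : ℝ := Real.smoothTransition (x - b)

variable {b x : ℝ}

lemma cutoff_eq_zero_of_le (h : x ≤ b) : cutoff b x = 0 :=
  Real.smoothTransition.zero_of_nonpos (by linarith)

lemma cutoff_eq_one_of_le (h : b + 1 ≤ x) : cutoff b x = 1 :=
  Real.smoothTransition.one_of_one_le (by linarith)

lemma cutoff_nonneg : 0 ≤ cutoff b x := Real.smoothTransition.nonneg _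

lemma cutoff_le_one : cutoff b x ≤ 1 := Real.smoothTransition.le_one _

lemma contDiff_cutoff (b : ℝ) : ContDiff ℝ 1 (cutoff b) :=
  Real.smoothTransition.contDiff.comp (contDiff_id.sub contDiff_const)

lemma hasCompactSupport_deriv_smoothTransition :
    HasCompactSupport (deriv Real.smoothTransition) := by
  refine HasCompactSupport.intro (isCompact_Icc (a := 0) (b := 1)) fun t ht => ?_
  rcases not_and_or.1 ht with h | h
  · have : Real.smoothTransition =ᶠ[𝓝 t] fun _ => 0 :=
      eventually_of_mem (Iio_mem_nhds (not_le.1 h)) fun y hy =>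
        Real.smoothTransition.zero_of_nonpos hy.le
    simp [this.deriv_eq]
  · have : Real.smoothTransition =ᶠ[𝓝 t] fun _ => 1 :=
      eventually_of_mem (Ioi_mem_nhds (not_le.1 h)) fun y hy =>
        Real.smoothTransition.one_of_one_le hy.le
    simp [this.deriv_eq]

lemma exists_abs_deriv_cutoff_le : ∃ c, ∀ b x, |deriv (cutoff b) x| ≤ c := by
  obtain ⟨c, hc⟩ := (Real.smoothTransition.contDiff.continuous_deriv le_rfl
    ).bounded_above_of_compact_support hasCompactSupport_deriv_smoothTransition
  refine ⟨c, fun b x => ?_⟩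
  rw [show cutoff b = fun y => Real.smoothTransition (y - b) from rfl, deriv_comp_sub_const]
  exact hc (x - b)

lemma tsupport_cutoff_sub_cutoff_subset :
    tsupport (fun x => cutoff b x - cutoff (b + 1) x) ⊆ Icc b (b + 2) := by
  refine closure_minimal (fun x hx => ?_) isClosed_Icc
  by_contra hout
  rcases not_and_or.1 hout with h | h
  · exact hx (by simp [cutoff_eq_zero_of_le (not_le.1 h).le,
      cutoff_eq_zero_of_le (by linarith : x ≤ b + 1)])
  · exact hx (by simp [cutoff_eq_one_of_le (by linarith : b + 1 ≤ x),
      cutoff_eq_one_of_le (by linarith : b + 1 + 1 ≤ x)])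

end Cutoff

section CutoffMultipliers

variable {f : ℝ → ℝ} {c : ℝ}

lemma abs_deriv_one_sub_cutoff_le (hc : ∀ b x, |deriv (cutoff b) x| ≤ c) (b x : ℝ) :
    |deriv (fun y => 1 - cutoff b y) x| ≤ c := by
  rw [deriv_const_sub, abs_neg]
  exact hc b x

lemma abs_deriv_cutoff_sub_cutoff_le (hc : ∀ b x, |deriv (cutoff b) x| ≤ c) (b b' x : ℝ) :
    |deriv (fun y => cutoff b y - cutoff b' y) x| ≤ 2 * c := by
  rw [deriv_fun_sub ((contDiff_cutoff b).differentiable one_ne_zero x)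
    ((contDiff_cutoff b').differentiable one_ne_zero x), two_mul]
  exact (abs_sub _ _).trans (add_le_add (hc b x) (hc b' x))

lemma abs_cutoff_sub_cutoff_le (b b' x : ℝ) : |cutoff b x - cutoff b' x| ≤ 1 :=
  abs_sub_le_iff.2
    ⟨by linarith [cutoff_nonneg (b := b') (x := x), cutoff_le_one (b := b) (x := x)],
    by linarith [cutoff_nonneg (b := b) (x := x), cutoff_le_one (b := b') (x := x)]⟩

lemma H1rad.one_sub_cutoff_mul (hf : H1rad f) (b : ℝ) :
    H1rad (fun x => (1 - cutoff b x) * f x) := by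
  obtain ⟨c, hc⟩ := exists_abs_deriv_cutoff_le
  refine hf.mul (contDiff_const.sub (contDiff_cutoff b)) (fun x => ?_)
    (abs_deriv_one_sub_cutoff_le hc b)
  rw [abs_of_nonneg (sub_nonneg.2 cutoff_le_one)]
  linarith [cutoff_nonneg (b := b) (x := x)]

lemma H1rad.cutoff_mul (hf : H1rad f) (b : ℝ) : H1rad (fun x => cutoff b x * f x) := by
  obtain ⟨c, hc⟩ := exists_abs_deriv_cutoff_le
  exact hf.mul (contDiff_cutoff b) (fun x => (abs_of_nonneg cutoff_nonneg).trans_le cutoff_le_one)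
    (hc b)

lemma H1rad.cutoff_sub_cutoff_mul (hf : H1rad f) (b b' : ℝ) :
    H1rad (fun x => (cutoff b x - cutoff b' x) * f x) := by
  obtain ⟨c, hc⟩ := exists_abs_deriv_cutoff_le
  exact hf.mul ((contDiff_cutoff b).sub (contDiff_cutoff b')) (abs_cutoff_sub_cutoff_le b b')
    (abs_deriv_cutoff_sub_cutoff_le hc b b')

lemma Kh_add_Mh_cutoff_sub_cutoff_mul_le (hf : H1rad f) (hc : ∀ b x, |deriv (cutoff b) x| ≤ c)
    {b : ℝ} (hb : 0 < b) :
    Kh (fun x => (cutoff b x - cutoff (b + 1) x) * f x)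
        + Mh (fun x => (cutoff b x - cutoff (b + 1) x) * f x)
      ≤ (8 * c ^ 2 + 2) * (4 * Real.pi * ∫ r in Icc b (b + 2), h1Density f r) := by
  have := Kh_add_Mh_mul_le_of_tsupport_subset hf
    ((contDiff_cutoff b).sub (contDiff_cutoff (b + 1))) (abs_cutoff_sub_cutoff_le b (b + 1))
    (abs_deriv_cutoff_sub_cutoff_le hc b (b + 1)) measurableSet_Icc (fun x hx => hb.trans_le hx.1)
    tsupport_cutoff_sub_cutoff_subset
  convert this using 2
  ring

end CutoffMultipliers

lemma exists_setIntegral_Ioc_le_div {w : ℝ → ℝ} {a ℓ : ℝ} (hℓ : 0 ≤ ℓ)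
    (hw : IntegrableOn w (Ioi a)) (hw0 : ∀ x ∈ Ioi a, 0 ≤ w x) {N : ℕ} (hN : 0 < N) :
    ∃ j < N, ∫ x in Ioc (a + j * ℓ) (a + j * ℓ + ℓ), w x ≤ (∫ x in Ioi a, w x) / N := by
  set p : ℕ → ℝ := fun j => a + j * ℓ with hp
  have hsucc : ∀ j, p (j + 1) = p j + ℓ := fun j => by simp only [hp]; push_cast; ring
  have hle : ∀ j, a ≤ p j := fun j => le_add_of_nonneg_right (by positivity)
  have hint : ∀ j < N, IntervalIntegrable w volume (p j) (p (j + 1)) := fun j _ =>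
    (intervalIntegrable_iff_integrableOn_Ioc_of_le (by linarith [hsucc j])).2
      (hw.mono_set (Ioc_subset_Ioi_self.trans (Ioi_subset_Ioi (hle j))))
  have htotal : ∑ j ∈ Finset.range N, ∫ x in p j..p (j + 1), w x ≤ ∫ x in Ioi a, w x := by
    rw [intervalIntegral.sum_integral_adjacent_intervals hint, show p 0 = a by simp [hp],
      intervalIntegral.integral_of_le (hle N)]
    exact setIntegral_mono_set hw (ae_restrict_of_forall_mem measurableSet_Ioi hw0)
      Ioc_subset_Ioi_self.eventuallyLE
  have hsplit : ∑ _j ∈ Finset.range N, (∫ x in Ioi a, w x) / N = ∫ x in Ioi a, w x := by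
    rw [Finset.sum_const, Finset.card_range, nsmul_eq_mul, mul_div_cancel₀]
    exact_mod_cast hN.ne'
  obtain ⟨j, hj, hwin⟩ := Finset.exists_le_of_sum_le (Finset.nonempty_range_iff.2 hN.ne')
    (htotal.trans_eq hsplit.symm)
  refine ⟨j, Finset.mem_range.1 hj, ?_⟩
  rwa [hsucc, intervalIntegral.integral_of_le (by linarith)] at hwin

lemma H1rad.exists_Icc_energy_le {f : ℝ → ℝ} (hf : H1rad f) {a : ℝ} (ha : 0 < a) {N : ℕ}
    (hN : 0 < N) : ∃ b, a ≤ b ∧ b + 2 ≤ a + 2 * N ∧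
      4 * Real.pi * ∫ r in Icc b (b + 2), h1Density f r ≤ (Kh f + Mh f) / N := by
  obtain ⟨j, hj, hwin⟩ := exists_setIntegral_Ioc_le_div zero_le_two
    (hf.integrableOn_h1Density.mono_set (Ioi_subset_Ioi ha.le))
    (fun x _ => h1Density_nonneg f x) hN
  have hjN : (j : ℝ) + 1 ≤ N := by exact_mod_cast hj
  refine ⟨a + j * 2, le_add_of_nonneg_right (by positivity), by linarith, ?_⟩
  have htail : ∫ r in Ioi a, h1Density f r ≤ ∫ r in Ioi 0, h1Density f r :=
    setIntegral_mono_set hf.integrableOn_h1Density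
      (ae_of_all _ (h1Density_nonneg f)) (Ioi_subset_Ioi ha.le).eventuallyLE
  rw [integral_Icc_eq_integral_Ioc, hf.Kh_add_Mh, mul_div_assoc]
  gcongr
  exact hwin.trans (by gcongr)

theorem decoupling_decomposition_far_general (R : ℝ)
    (Rk : ℕ → ℝ) (hRk : Tendsto Rk atTop atTop)
    (ε : ℝ) (hε : 0 < ε)
    (f : ℕ → ℝ → ℝ) (hf : ∀ k, H1rad (f k))
    (hbdd : ∃ C : ℝ, ∀ k, H1norm (f k) ≤ C) :
    ∃ k : ℕ → ℕ, StrictMono k ∧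
    ∃ g h rr : ℕ → ℝ → ℝ, ∃ Rt : ℕ → ℝ,
      Tendsto Rt atTop atTop ∧
      (∀ n, H1rad (g n) ∧ H1rad (h n) ∧ H1rad (rr n)) ∧
      (∀ n, ∀ x, f (k n) x = g n x + h n x + rr n x) ∧
      (∀ᶠ n in atTop,
        (∀ x : ℝ, 0 < x → x ≤ R → g n x = f (k n) x) ∧
        (∀ x : ℝ, Rk (k n) ≤ x → h n x = f (k n) x) ∧
        (∀ x : ℝ, g n x = 0 ∨ h n x = 0) ∧
        (∀ x : ℝ, 0 < x → x ≤ Rt n → h n x = 0) ∧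
        H1norm (rr n) ≤ ε) := by
  obtain ⟨C, hC⟩ := hbdd
  obtain ⟨c, hc⟩ := exists_abs_deriv_cutoff_le
  obtain ⟨N, hN⟩ := exists_nat_gt ((8 * c ^ 2 + 2) * C ^ 2 / ε ^ 2)
  have hN0 : 0 < N := by
    exact_mod_cast (by positivity : 0 ≤ (8 * c ^ 2 + 2) * C ^ 2 / ε ^ 2).trans_lt hN
  obtain ⟨k, hk, hkR⟩ := extraction_forall_of_eventually fun n : ℕ =>
    hRk.eventually_ge_atTop (max R (n + 1) + 2 * N)
  choose b hab hbN hbE using fun n : ℕ =>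
    (hf (k n)).exists_Icc_energy_le (a := max R (n + 1)) (lt_max_of_lt_right (by positivity)) hN0
  have hRb : ∀ n, R ≤ b n := fun n => (le_max_left _ _).trans (hab n)
  have hnb : ∀ n : ℕ, (n : ℝ) + 1 ≤ b n := fun n => (le_max_right _ _).trans (hab n)
  refine ⟨k, hk, fun n x => (1 - cutoff (b n) x) * f (k n) x,
    fun n x => cutoff (b n + 1) x * f (k n) x,
    fun n x => (cutoff (b n) x - cutoff (b n + 1) x) * f (k n) x, fun n => b n + 1,
    tendsto_atTop_mono (fun n => by linarith [hnb n]) tendsto_natCast_atTop_atTop,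
    fun n => ⟨(hf _).one_sub_cutoff_mul _, (hf _).cutoff_mul _,
      (hf _).cutoff_sub_cutoff_mul _ _⟩,
    fun n x => by ring, Eventually.of_forall fun n => ⟨fun x _ hx => ?_, fun x hx => ?_,
      fun x => ?_, fun x _ hx => ?_, ?_⟩⟩
  · simp [cutoff_eq_zero_of_le (hx.trans (hRb n))]
  · simp [cutoff_eq_one_of_le (by linarith [hbN n, hkR n] : b n + 1 + 1 ≤ x)]
  · rcases le_or_gt x (b n + 1) with hx | hx
    · simp [cutoff_eq_zero_of_le hx]
    · simp [cutoff_eq_one_of_le hx.le]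
  · simp [cutoff_eq_zero_of_le hx]
  · have hfC : Kh (f (k n)) + Mh (f (k n)) ≤ C ^ 2 := (Real.sqrt_le_iff.1 (hC _)).2
    refine Real.sqrt_le_iff.2 ⟨hε.le, ?_⟩
    calc _ ≤ (8 * c ^ 2 + 2)
            * (4 * Real.pi * ∫ r in Icc (b n) (b n + 2), h1Density (f (k n)) r) :=
          Kh_add_Mh_cutoff_sub_cutoff_mul_le (hf _) hc (by linarith [hnb n])
      _ ≤ (8 * c ^ 2 + 2) * (C ^ 2 / N) := by gcongr; exact (hbE n).trans (by gcongr)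
      _ ≤ ε ^ 2 := by
        rw [← mul_div_assoc, div_le_iff₀ (by exact_mod_cast hN0)]
        rw [div_lt_iff₀ (by positivity)] at hN
        linarith

/-- Decoupling decomposition away from the origin. -/
theorem decoupling_decomposition_far (R : ℝ) (hR : 0 < R)
    (Rk : ℕ → ℝ) (hRkpos : ∀ k, 0 < Rk k) (hRk : Tendsto Rk atTop atTop)
    (ε : ℝ) (hε : 0 < ε)
    (f : ℕ → ℝ → ℝ) (hf : ∀ k, H1rad (f k))
    (hbdd : ∃ C : ℝ, ∀ k, H1norm (f k) ≤ C) :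
    ∃ k : ℕ → ℕ, StrictMono k ∧
    ∃ g h rr : ℕ → ℝ → ℝ, ∃ Rt : ℕ → ℝ,
      Tendsto Rt atTop atTop ∧
      (∀ n, H1rad (g n) ∧ H1rad (h n) ∧ H1rad (rr n)) ∧
      (∀ n, ∀ x, f (k n) x = g n x + h n x + rr n x) ∧
      (∀ᶠ n in atTop,
        (∀ x : ℝ, 0 < x → x ≤ R → g n x = f (k n) x) ∧
        (∀ x : ℝ, Rk (k n) ≤ x → h n x = f (k n) x) ∧
        (∀ x : ℝ, g n x = 0 ∨ h n x = 0) ∧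
        (∀ x : ℝ, 0 < x → x ≤ Rt n → h n x = 0) ∧
        H1norm (rr n) ≤ ε) :=
  decoupling_decomposition_far_general R Rk hRk ε hε f hf hbdd
end
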